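/- Let k = k(n) be any sequence of integers with 1 ≤ k(n) ≤ n−1. Then w.h.p. Q^n(k(n)) contains a vertex of degree exactly k(n); consequently, w.h.p. Q^n(k(n)) is not (k(n)+1)-connected. -/

import Mathlib

open scoped Classical
open Filter

noncomputable section

/-- The vertex set of the `n`-dimensional hypercube: `{0,1}^n`. -/
abbrev Vtx (n : ℕ) := Fin n → Bool

/-- The `n`-dimensional hypercube graph `Q^n`: two vertices are adjacent iff they
differ in exactly one coordinate. -/
def cubeGraph (n : ℕ) : SimpleGraph (Vtx n) :=
  SimpleGraph.fromRel (fun u v => hammingDist u v = 1)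

/-- Sample space for the `k`-out model on `Q^n`: each vertex `v` chooses a
`k`-element set of its neighbours (equivalently, `k` incident edges). -/
abbrev KOut (n k : ℕ) :=
  ∀ v : Vtx n, {s : Finset (Vtx n) // s.card = k ∧ ∀ u ∈ s, (cubeGraph n).Adj v u}

/-- The random subgraph `Q^n(k)` produced by an outcome of the `k`-out model:
`u` and `v` are adjacent iff one of them chose the edge between them. -/
def kOutGraph (n k : ℕ) (ω : KOut n k) : SimpleGraph (Vtx n) :=
  SimpleGraph.fromRel (fun u v => v ∈ (ω u).1)

/-- Uniform (counting) probability of an event on a finite sample space. -/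
def prob {Ω : Type*} [Finite Ω] (p : Ω → Prop) : ℝ :=
  (Nat.card {ω : Ω // p ω} : ℝ) / (Nat.card Ω : ℝ)

/-- Number of vertices in the connected component of `v` in `G`. -/
def compSize {V : Type*} (G : SimpleGraph V) (v : V) : ℕ :=
  Nat.card {w : V // G.Reachable v w}

/-- A graph is `ℓ`-connected if it has more than `ℓ` vertices and remains connected
whenever fewer than `ℓ` vertices are removed. -/
def IsLConnected {V : Type*} [Fintype V] (G : SimpleGraph V) (l : ℕ) : Prop :=
  l < Fintype.card V ∧
    ∀ s : Finset V, s.card < l → (G.induce ((↑s : Set V)ᶜ)).Connected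

/-- The degree of `v` in `G`. -/
def deg {V : Type*} (G : SimpleGraph V) (v : V) : ℕ :=
  Nat.card {u : V // G.Adj v u}

/-! A vertex `v` has degree exactly `k` in `Q^n(k)` iff every neighbour that chose the edge to `v`
was also chosen by `v`; removing those `k` neighbours then cuts `v` off, so the graph is not
`(k+1)`-connected. Given the choice of `v`, each of its `n - k` unchosen neighbours must avoid `v`,
so this happens with probability `q = (C(n-1,k) / C(n,k))^(n-k) = ((n-k)/n)^(n-k) ≥ e^(-n/e)`, and
for vertices at distance at least three these events depend on disjoint sets of choices and are
independent. The second moment method for the number of such vertices gives probability at least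
`1 - (n+1)^2 / (2^n q) ≥ 1 - (n+1)^2 (e^(1/e) / 2)^n → 1`, since `e^(1/e) < 2`. -/

open Finset Real

section Prob

variable {Ω : Type*} [Fintype Ω]

lemma prob_eq_card_filter (p : Ω → Prop) [DecidablePred p] :
    prob p = (#(univ.filter p) : ℝ) / Fintype.card Ω := by
  rw [prob, Nat.card_eq_fintype_card, Nat.card_eq_fintype_card, Fintype.card_subtype]

lemma prob_mono {p q : Ω → Prop} (h : ∀ ω, p ω → q ω) : prob p ≤ prob q := by
  rw [prob_eq_card_filter, prob_eq_card_filter]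
  gcongr with ω
  exact h ω

lemma prob_nonneg (p : Ω → Prop) : 0 ≤ prob p := by
  unfold prob
  positivity

lemma prob_le_one (p : Ω → Prop) : prob p ≤ 1 := by
  rw [prob_eq_card_filter]
  exact div_le_one_of_le₀ (mod_cast card_le_univ _) (Nat.cast_nonneg _)

lemma prob_congr_equiv {Ω' : Type*} [Fintype Ω'] (e : Ω ≃ Ω') {p : Ω → Prop} {q : Ω' → Prop}
    (h : ∀ ω, p ω ↔ q (e ω)) : prob p = prob q := by
  rw [prob, prob, Nat.card_congr e, Nat.card_congr (e.subtypeEquiv h)]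

lemma prob_prod {α β : Type*} [Fintype α] [Fintype β] (p : α × β → Prop) :
    prob p = (∑ a, prob fun b => p (a, b)) / Fintype.card α := by
  simp only [prob_eq_card_filter, ← sum_div, Fintype.card_prod, Nat.cast_mul]
  rw [div_div, mul_comm (Fintype.card β : ℝ), ← Nat.cast_sum]
  congr 2
  simp only [card_filter, Fintype.sum_prod_type]

lemma prob_pi_forall_mem {ι : Type*} [Fintype ι] {C : ι → Type*} [∀ i, Fintype (C i)]
    (t : ∀ i, Finset (C i)) :
    prob (fun f : ∀ i, C i => ∀ i, f i ∈ t i) = ∏ i, (#(t i) : ℝ) / Fintype.card (C i) := by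
  rw [prob, Nat.card_congr Equiv.subtypePiEquivPi, Nat.card_pi, Nat.card_pi, prod_div_distrib]
  push_cast
  simp only [Nat.card_eq_fintype_card, Fintype.card_coe]

/-- The second moment method for the number of events `E i` that occur. -/
lemma sq_sum_prob_le_prob_exists_mul {ι : Type*} [Fintype ι] (E : ι → Ω → Prop) :
    (∑ i, prob (E i)) ^ 2 ≤
      prob (fun ω => ∃ i, E i ω) * ∑ i, ∑ j, prob (fun ω => E i ω ∧ E j ω) := by
  set X : Ω → ℕ := fun ω => #(univ.filter fun i => E i ω)
  have hmoment_div : ∑ i, #(univ.filter (E i)) = ∑ ω, X ω := by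
    simp only [X, card_filter]
    exact sum_comm
  have hsecond : ∑ i, ∑ j, #(univ.filter fun ω => E i ω ∧ E j ω) = ∑ ω, X ω ^ 2 := by
    simp only [X, card_filter, sq, sum_mul_sum, ite_zero_mul_ite_zero, mul_one]
    exact (sum_congr rfl fun _ _ => sum_comm).trans sum_comm
  have hsupport : ∑ ω ∈ univ.filter (fun ω => ∃ i, E i ω), X ω = ∑ ω, X ω :=
    sum_filter_of_ne fun ω _ hX => by simpa [X, filter_nonempty_iff] using hX
  have hcs : (∑ ω, X ω) ^ 2 ≤ #(univ.filter fun ω => ∃ i, E i ω) * ∑ ω, X ω ^ 2 := by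
    rw [← hsupport]
    exact sq_sum_le_card_mul_sum_sq.trans
      (Nat.mul_le_mul_left _ (sum_le_sum_of_subset (subset_univ _)))
  simp only [prob_eq_card_filter, ← sum_div, ← Nat.cast_sum]
  rw [hmoment_div, hsecond, div_pow, div_mul_div_comm, ← sq]
  gcongr
  exact_mod_cast hcs

end Prob

lemma not_isLConnected_deg_add_one {V : Type*} [Fintype V] (G : SimpleGraph V) (v : V) :
    ¬ IsLConnected G (deg G v + 1) := by
  rintro ⟨hcard, hconn⟩
  set N := univ.filter (G.Adj v)
  have hN : #N = deg G v := by rw [deg, Nat.card_eq_fintype_card, Fintype.card_subtype]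
  obtain ⟨w, hw⟩ : ∃ w, w ∉ insert v N := by
    by_contra! h
    have := card_le_card (fun x _ => h x : univ ⊆ insert v N)
    have := card_insert_le v N
    rw [card_univ] at *
    omega
  have hvN : v ∉ N := by simp [N]
  rw [mem_insert, not_or] at hw
  obtain ⟨p⟩ := (hconn N (by omega)).preconnected ⟨v, hvN⟩ ⟨w, hw.2⟩
  have hp : ¬ p.Nil := SimpleGraph.Walk.not_nil_of_ne fun h => hw.1 (congrArg Subtype.val h).symm
  exact p.snd.2 (by simpa [N] using p.adj_snd hp)

section Hypercube

variable {n : ℕ}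

lemma cubeGraph_adj {u v : Vtx n} : (cubeGraph n).Adj u v ↔ hammingDist u v = 1 := by
  rw [cubeGraph, SimpleGraph.fromRel_adj, hammingDist_comm v u, or_self]
  exact and_iff_right_of_imp fun h huv => by simp [huv] at h

lemma card_filter_hammingDist_eq (v : Vtx n) (r : ℕ) :
    #(univ.filter fun w => hammingDist v w = r) = n.choose r := by
  set flip : Finset (Fin n) → Vtx n := fun D i => if i ∈ D then !v i else v i
  have hdiff : ∀ D, univ.filter (fun i => v i ≠ flip D i) = D := by
    intro D
    ext i
    by_cases h : i ∈ D <;> simp [flip, h]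
  rw [show n.choose r = #(powersetCard r (univ : Finset (Fin n))) by simp]
  refine card_nbij' (fun w => univ.filter fun i => v i ≠ w i) flip ?_ ?_ ?_ ?_
  · intro w hw
    simpa [hammingDist] using hw
  · intro D hD
    rw [mem_coe, mem_powersetCard] at hD
    simp only [coe_filter, mem_univ, true_and]
    rw [Set.mem_ofPred_eq, hammingDist, hdiff, hD.2]
  · intro w _
    ext i
    by_cases h : v i = w i
    · simp [flip, h]
    · simp [flip, Bool.eq_not.mpr h]
  · intro D _
    exact hdiff D

lemma card_cubeGraph_neighbors (v : Vtx n) : #(univ.filter ((cubeGraph n).Adj v)) = n := by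
  simpa only [cubeGraph_adj, Nat.choose_one_right] using card_filter_hammingDist_eq v 1

lemma card_filter_hammingDist_le_two (v : Vtx n) :
    #(univ.filter fun w => hammingDist v w ≤ 2) ≤ (n + 1) ^ 2 := by
  have hball : univ.filter (fun w => hammingDist v w ≤ 2) ⊆
      (range 3).biUnion fun r => univ.filter fun w => hammingDist v w = r := by
    intro w
    simp [Nat.lt_succ_iff]
  calc #(univ.filter fun w => hammingDist v w ≤ 2)
      ≤ ∑ r ∈ range 3, n.choose r := by
        simpa only [card_filter_hammingDist_eq] using (card_le_card hball).trans card_biUnion_le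
    _ ≤ (n + 1) ^ 2 := by
        simp only [sum_range_succ, range_zero, sum_empty, Nat.choose_zero_right,
          Nat.choose_one_right]
        nlinarith [Nat.choose_le_pow n 2]

lemma hammingDist_le_two_of_adj {u v w : Vtx n} (hv : (cubeGraph n).Adj v u)
    (hw : (cubeGraph n).Adj w u) : hammingDist v w ≤ 2 := by
  rw [cubeGraph_adj] at hv hw
  have := hammingDist_triangle v u w
  rw [hammingDist_comm u w] at this
  omega

/-- The closed neighbourhoods of distinct vertices of `T` are disjoint. -/
def IsSeparated (T : Finset (Vtx n)) : Prop :=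
  ∀ v ∈ T, ∀ w ∈ T, v ≠ w → 2 < hammingDist v w

lemma IsSeparated.not_adj {T : Finset (Vtx n)} (hT : IsSeparated T) {v w : Vtx n} (hv : v ∈ T)
    (hw : w ∈ T) : ¬ (cubeGraph n).Adj v w := fun h => by
  have := hT v hv w hw h.ne
  rw [cubeGraph_adj.1 h] at this
  omega

lemma IsSeparated.eq_of_adj {T : Finset (Vtx n)} (hT : IsSeparated T) {u v w : Vtx n}
    (hv : v ∈ T) (hw : w ∈ T) (hvu : (cubeGraph n).Adj v u) (hwu : (cubeGraph n).Adj w u) :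
    v = w := by
  by_contra hvw
  have := hT v hv w hw hvw
  have := hammingDist_le_two_of_adj hvu hwu
  omega

end Hypercube

section Asymptotics

lemma le_exp_div_exp_one (y : ℝ) : y ≤ exp (y / exp 1) := by
  have h := add_one_le_exp (y / exp 1 - 1)
  rw [sub_add_cancel, exp_sub, div_le_div_iff_of_pos_right (exp_pos 1)] at h
  exact h

lemma div_pow_le_exp_inv_exp_one_pow {m j : ℕ} (hj : 0 < j) :
    ((m : ℝ) / j) ^ j ≤ exp (exp 1)⁻¹ ^ m := by
  calc ((m : ℝ) / j) ^ j ≤ exp (m / j / exp 1) ^ j :=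
        pow_le_pow_left₀ (by positivity) (le_exp_div_exp_one _) j
    _ = exp (exp 1)⁻¹ ^ m := by
        rw [← exp_nat_mul, ← exp_nat_mul]
        field_simp

lemma exp_inv_exp_one_lt_two : exp (exp 1)⁻¹ < 2 := by
  have he := exp_one_gt_d9
  have hlog := log_two_gt_d9
  calc exp (exp 1)⁻¹ < exp (log 2) := by
        refine exp_lt_exp.2 ((inv_lt_inv₀ (exp_pos 1) two_pos).2 (by linarith) |>.trans ?_)
        linarith
    _ = 2 := exp_log two_pos

lemma tendsto_add_one_sq_mul_pow {ρ : ℝ} (hρ : |ρ| < 1) :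
    Tendsto (fun n : ℕ => ((n : ℝ) + 1) ^ 2 * ρ ^ n) atTop (nhds 0) := by
  have h2 := tendsto_pow_const_mul_const_pow_of_abs_lt_one 2 hρ
  have h1 := tendsto_pow_const_mul_const_pow_of_abs_lt_one 1 hρ
  have h0 := tendsto_pow_const_mul_const_pow_of_abs_lt_one 0 hρ
  simpa [add_sq, add_mul, mul_assoc] using (h2.add (h1.const_mul 2)).add h0

end Asymptotics

section KOut

variable {n k : ℕ}

abbrev Choice (n k : ℕ) (v : Vtx n) :=
  {s : Finset (Vtx n) // s.card = k ∧ ∀ u ∈ s, (cubeGraph n).Adj v u}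

lemma card_choice (v : Vtx n) : Fintype.card (Choice n k v) = n.choose k := by
  have hchoices : univ.filter (fun s : Finset (Vtx n) => s.card = k ∧
      ∀ u ∈ s, (cubeGraph n).Adj v u) = powersetCard k (univ.filter ((cubeGraph n).Adj v)) := by
    ext s
    simp only [mem_filter, mem_univ, true_and, mem_powersetCard, subset_iff]
    tauto
  rw [Fintype.card_subtype, hchoices, card_powersetCard, card_cubeGraph_neighbors]

lemma card_filter_choice_notMem {u v : Vtx n} (h : (cubeGraph n).Adj u v) :
    #(univ.filter fun c : Choice n k u => v ∉ c.1) = (n - 1).choose k := by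
  have hv : v ∈ univ.filter ((cubeGraph n).Adj u) := by simpa using h
  calc #(univ.filter fun c : Choice n k u => v ∉ c.1)
      = #(powersetCard k ((univ.filter ((cubeGraph n).Adj u)).erase v)) := by
        refine card_nbij Subtype.val ?_ Subtype.val_injective.injOn ?_
        · rintro ⟨s, hcard, hadj⟩ hs
          simp only [coe_filter, mem_univ, true_and, Set.mem_ofPred_eq] at hs
          simp only [mem_coe, mem_powersetCard, subset_iff, mem_erase, mem_filter, mem_univ,
            true_and]
          exact ⟨fun x hx => ⟨fun hxv => hs (hxv ▸ hx), hadj x hx⟩, hcard⟩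
        · intro s hs
          simp only [mem_coe, mem_powersetCard, subset_iff, mem_erase, mem_filter,
            mem_univ, true_and] at hs
          exact ⟨⟨s, hs.2, fun x hx => (hs.1 hx).2⟩, by simpa using fun hvs => (hs.1 hvs).1 rfl,
            rfl⟩
    _ = (n - 1).choose k := by
        rw [card_powersetCard, card_erase_of_mem hv, card_cubeGraph_neighbors]

def Reciprocated (ω : KOut n k) (v : Vtx n) : Prop :=
  ∀ u, v ∈ (ω u).1 → u ∈ (ω v).1

lemma deg_kOutGraph_eq_iff_reciprocated (ω : KOut n k) (v : Vtx n) :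
    deg (kOutGraph n k ω) v = k ↔ Reciprocated ω v := by
  have hnbrs : univ.filter ((kOutGraph n k ω).Adj v) =
      (ω v).1 ∪ univ.filter fun u => v ∈ (ω u).1 := by
    ext u
    rw [mem_filter, mem_union, mem_filter]
    simp only [mem_univ, true_and, kOutGraph, SimpleGraph.fromRel_adj]
    refine ⟨fun h => h.2, fun h => ⟨?_, h⟩⟩
    exact h.elim (fun hu => ((ω v).2.2 u hu).ne) fun hu => ((ω u).2.2 v hu).ne.symm
  rw [deg, Nat.card_eq_fintype_card, Fintype.card_subtype, hnbrs]
  constructor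
  · intro hcard u hu
    have hunion := eq_of_superset_of_card_ge subset_union_left (hcard.trans (ω v).2.1.symm).le
    exact hunion ▸ mem_union_right _ (by simpa using hu)
  · intro h
    rw [union_eq_left.2 fun u hu => h u (by simpa using hu), (ω v).2.1]

def compatibleChoices (T : Finset (Vtx n)) (σ : ∀ v : T, Choice n k v) (u : Vtx n) :
    Finset (Choice n k u) :=
  univ.filter fun c => ∀ v : T, v.1 ∈ c.1 → u ∈ (σ v).1

def unchosenNeighbors (T : Finset (Vtx n)) (σ : ∀ v : T, Choice n k v) : Finset (Vtx n) :=
  T.attach.biUnion fun v => univ.filter ((cubeGraph n).Adj v) \ (σ v).1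

lemma mem_unchosenNeighbors {T : Finset (Vtx n)} {σ : ∀ v : T, Choice n k v} {u : Vtx n} :
    u ∈ unchosenNeighbors T σ ↔ ∃ v : T, (cubeGraph n).Adj v u ∧ u ∉ (σ v).1 := by
  simp [unchosenNeighbors]

lemma card_unchosenNeighbors {T : Finset (Vtx n)} (hT : IsSeparated T)
    (σ : ∀ v : T, Choice n k v) : #(unchosenNeighbors T σ) = #T * (n - k) := by
  rw [unchosenNeighbors, card_biUnion]
  · calc ∑ v ∈ T.attach, #(univ.filter ((cubeGraph n).Adj v) \ (σ v).1)
        = ∑ _v ∈ T.attach, (n - k) := sum_congr rfl fun v _ => by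
          rw [card_sdiff_of_subset fun u hu => by simpa using (σ v).2.2 u hu,
            card_cubeGraph_neighbors, (σ v).2.1]
      _ = #T * (n - k) := by rw [sum_const, card_attach, smul_eq_mul]
  · intro v _ w _ hvw
    exact (disjoint_filter.2 fun u _ hv hw => hvw (Subtype.ext (hT.eq_of_adj v.2 w.2 hv hw))).mono
      sdiff_subset sdiff_subset

lemma card_compatibleChoices {T : Finset (Vtx n)} (hT : IsSeparated T)
    (σ : ∀ v : T, Choice n k v) (u : Vtx n) :
    #(compatibleChoices T σ u) =
      if u ∈ unchosenNeighbors T σ then (n - 1).choose k else n.choose k := by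
  split_ifs with hu
  · obtain ⟨v, hvu, huσ⟩ := mem_unchosenNeighbors.1 hu
    rw [← card_filter_choice_notMem hvu.symm]
    congr 1
    ext c
    simp only [compatibleChoices, mem_filter, mem_univ, true_and]
    refine ⟨fun hc hvc => huσ (hc v hvc), fun hvc w hwc => ?_⟩
    obtain rfl : w = v :=
      Subtype.ext (hT.eq_of_adj w.2 v.2 ((c.2.2 w hwc).symm) hvu)
    exact absurd hwc hvc
  · rw [← card_choice u]
    congr 1
    refine filter_true_of_mem fun c _ v hvc => ?_
    by_contra huσ
    exact hu (mem_unchosenNeighbors.2 ⟨v, (c.2.2 v hvc).symm, huσ⟩)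

lemma forall_reciprocated_iff {T : Finset (Vtx n)} (hT : IsSeparated T) (ω : KOut n k) :
    (∀ v ∈ T, Reciprocated ω v) ↔
      ∀ u : {u // u ∉ T}, ω u ∈ compatibleChoices T (fun v => ω v) u := by
  simp only [compatibleChoices, mem_filter, mem_univ, true_and, Subtype.forall]
  constructor
  · exact fun h u _ v hv hvu => h v hv u hvu
  · intro h v hv u hvu
    by_cases hu : u ∈ T
    · exact absurd ((ω u).2.2 v hvu) (hT.not_adj hu hv)
    · exact h u hu v hv hvu

lemma notMem_of_mem_unchosenNeighbors {T : Finset (Vtx n)} (hT : IsSeparated T)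
    {σ : ∀ v : T, Choice n k v} {u : Vtx n} (hu : u ∈ unchosenNeighbors T σ) : u ∉ T := by
  obtain ⟨v, hvu, -⟩ := mem_unchosenNeighbors.1 hu
  exact fun huT => hT.not_adj v.2 huT hvu

def reciprocatedProb (n k : ℕ) : ℝ :=
  (((n - 1).choose k : ℝ) / n.choose k) ^ (n - k)

lemma prob_forall_reciprocated (hk : k ≤ n) {T : Finset (Vtx n)} (hT : IsSeparated T) :
    prob (fun ω : KOut n k => ∀ v ∈ T, Reciprocated ω v) = reciprocatedProb n k ^ #T := by
  set r : ℝ := ((n - 1).choose k : ℝ) / n.choose k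
  have hchoose : (n.choose k : ℝ) ≠ 0 := by exact_mod_cast (Nat.choose_pos hk).ne'
  -- Once the choices `σ` of the vertices of `T` are fixed, the event constrains each remaining
  -- vertex separately, and only the `#T * (n - k)` unchosen neighbours of `T` nontrivially.
  have hfiber : ∀ σ : ∀ v : T, Choice n k v,
      prob (fun ρ : ∀ u : {u // u ∉ T}, Choice n k u => ∀ u, ρ u ∈ compatibleChoices T σ u.1) =
        r ^ (#T * (n - k)) := by
    intro σ
    calc _ = ∏ u : {u // u ∉ T}, (if u.1 ∈ unchosenNeighbors T σ then r else 1) := by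
          rw [prob_pi_forall_mem]
          refine prod_congr rfl fun u _ => ?_
          rw [card_compatibleChoices hT, card_choice]
          split_ifs <;> simp [r, hchoose]
      _ = ∏ u, (if u ∈ unchosenNeighbors T σ then r else 1) := by
          rw [← Fintype.prod_subtype_mul_prod_subtype (· ∈ T)
              fun u => if u ∈ unchosenNeighbors T σ then r else 1,
            prod_eq_one fun (u : {u // u ∈ T}) _ =>
              if_neg fun hu => notMem_of_mem_unchosenNeighbors hT hu u.2,
            one_mul]
      _ = r ^ (#T * (n - k)) := by
          rw [Fintype.prod_ite_mem, prod_const, card_unchosenNeighbors hT]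
  have hcard : (Fintype.card (∀ v : T, Choice n k v) : ℝ) ≠ 0 := by
    simp [Fintype.card_pi, card_choice, hchoose]
  rw [prob_congr_equiv (Equiv.piEquivPiSubtypeProd (· ∈ T) (Choice n k))
      (q := fun x => ∀ u, x.2 u ∈ compatibleChoices T x.1 u.1) (forall_reciprocated_iff hT),
    prob_prod]
  simp only [hfiber, sum_const, card_univ, nsmul_eq_mul]
  rw [mul_div_cancel_left₀ _ hcard, pow_mul', reciprocatedProb]

lemma reciprocatedProb_pos (hkn : k < n) : 0 < reciprocatedProb n k := by
  have := Nat.choose_pos (Nat.le_sub_one_of_lt hkn)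
  have := Nat.choose_pos hkn.le
  unfold reciprocatedProb
  positivity

lemma prob_reciprocated (hk : k ≤ n) (v : Vtx n) :
    prob (fun ω : KOut n k => Reciprocated ω v) = reciprocatedProb n k := by
  have hT : IsSeparated {v} := by simp [IsSeparated]
  simpa using prob_forall_reciprocated hk hT

lemma prob_reciprocated_and_le (hk : k ≤ n) (v w : Vtx n) :
    prob (fun ω : KOut n k => Reciprocated ω v ∧ Reciprocated ω w) ≤
      if hammingDist v w ≤ 2 then reciprocatedProb n k else reciprocatedProb n k ^ 2 := by
  split_ifs with hvw
  · exact (prob_mono fun _ h => h.1).trans (prob_reciprocated hk v).le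
  · have hne : v ≠ w := by rintro rfl; simp at hvw
    have hT : IsSeparated {v, w} := by
      simp only [IsSeparated, mem_insert, mem_singleton]
      rintro a (rfl | rfl) b (rfl | rfl) hab <;> simp_all [hammingDist_comm]
    have := prob_forall_reciprocated hk hT
    simp only [mem_insert, mem_singleton, forall_eq_or_imp, forall_eq, card_pair hne] at this
    exact this.le

lemma sum_prob_reciprocated_and_le (hk : k ≤ n) :
    ∑ v : Vtx n, ∑ w, prob (fun ω : KOut n k => Reciprocated ω v ∧ Reciprocated ω w) ≤
      2 ^ n * ((n + 1) ^ 2 * reciprocatedProb n k + 2 ^ n * reciprocatedProb n k ^ 2) := by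
  set q := reciprocatedProb n k
  have hq : 0 ≤ q := by unfold q reciprocatedProb; positivity
  have hv : ∀ v : Vtx n,
      ∑ w, prob (fun ω : KOut n k => Reciprocated ω v ∧ Reciprocated ω w) ≤
        (n + 1) ^ 2 * q + 2 ^ n * q ^ 2 := by
    intro v
    calc _ ≤ ∑ w, if hammingDist v w ≤ 2 then q else q ^ 2 :=
          sum_le_sum fun w _ => prob_reciprocated_and_le hk v w
      _ = #(univ.filter fun w => hammingDist v w ≤ 2) * q +
            #(univ.filter fun w => ¬ hammingDist v w ≤ 2) * q ^ 2 := by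
          rw [sum_ite, sum_const, sum_const, nsmul_eq_mul, nsmul_eq_mul]
      _ ≤ (n + 1) ^ 2 * q + 2 ^ n * q ^ 2 := by
          gcongr
          · exact_mod_cast card_filter_hammingDist_le_two v
          · exact_mod_cast (card_filter_le _ _).trans_eq (by simp)
  calc _ ≤ ∑ _v : Vtx n, ((n + 1) ^ 2 * q + 2 ^ n * q ^ 2) := sum_le_sum fun v _ => hv v
    _ = 2 ^ n * ((n + 1) ^ 2 * q + 2 ^ n * q ^ 2) := by simp [mul_add]

lemma one_sub_div_le_prob_exists_reciprocated (hkn : k < n) :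
    1 - (n + 1) ^ 2 / (2 ^ n * reciprocatedProb n k) ≤
      prob (fun ω : KOut n k => ∃ v, Reciprocated ω v) := by
  set q := reciprocatedProb n k
  set P := prob (fun ω : KOut n k => ∃ v, Reciprocated ω v)
  have hq := reciprocatedProb_pos hkn
  have hP0 : 0 ≤ P := prob_nonneg _
  have hP1 : P ≤ 1 := prob_le_one _
  have hmoment := sq_sum_prob_le_prob_exists_mul fun v (ω : KOut n k) => Reciprocated ω v
  simp only [prob_reciprocated hkn.le, sum_const, card_univ, nsmul_eq_mul] at hmoment
  replace hmoment :=
    hmoment.trans (mul_le_mul_of_nonneg_left (sum_prob_reciprocated_and_le hkn.le) hP0)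
  simp only [Fintype.card_fun, Fintype.card_bool, Fintype.card_fin, Nat.cast_pow,
    Nat.cast_ofNat] at hmoment
  have hBq : 0 < 2 ^ n * q := by positivity
  have hmoment_div : 2 ^ n * q ≤ P * ((n + 1) ^ 2 + 2 ^ n * q) :=
    le_of_mul_le_mul_left (by nlinarith) hBq
  rw [sub_le_comm, le_div_iff₀ hBq]
  nlinarith

lemma inv_reciprocatedProb_le (hkn : k < n) :
    (reciprocatedProb n k)⁻¹ ≤ exp (exp 1)⁻¹ ^ n := by
  have hratio : ((n - 1).choose k : ℝ) / n.choose k = ((n - k : ℕ) : ℝ) / n := by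
    have hchoose := Nat.choose_mul_succ_eq (n - 1) k
    rw [Nat.sub_add_cancel (by omega)] at hchoose
    have := Nat.choose_pos hkn.le
    have : 0 < n := by omega
    rw [div_eq_div_iff (by positivity) (by positivity), mul_comm _ (n.choose k : ℝ)]
    exact_mod_cast hchoose
  rw [reciprocatedProb, hratio, ← inv_pow, inv_div]
  exact div_pow_le_exp_inv_exp_one_pow (by omega)

lemma one_sub_le_prob_exists_reciprocated (hkn : k < n) :
    1 - ((n : ℝ) + 1) ^ 2 * (exp (exp 1)⁻¹ / 2) ^ n ≤
      prob (fun ω : KOut n k => ∃ v, Reciprocated ω v) := by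
  refine le_trans ?_ (one_sub_div_le_prob_exists_reciprocated hkn)
  have hq := reciprocatedProb_pos hkn
  gcongr 1 - ?_
  calc ((n : ℝ) + 1) ^ 2 / (2 ^ n * reciprocatedProb n k)
      = ((n : ℝ) + 1) ^ 2 * (reciprocatedProb n k)⁻¹ / 2 ^ n := by field_simp
    _ ≤ ((n : ℝ) + 1) ^ 2 * exp (exp 1)⁻¹ ^ n / 2 ^ n := by
        gcongr
        exact inv_reciprocatedProb_le hkn
    _ = ((n : ℝ) + 1) ^ 2 * (exp (exp 1)⁻¹ / 2) ^ n := by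
        rw [div_pow, mul_div_assoc]

end KOut

/-- For any sequence of integers `k(n)` with `1 ≤ k(n) ≤ n−1`, w.h.p. `Q^n(k(n))`
contains a vertex of degree exactly `k(n)`, and consequently is not
`(k(n)+1)`-connected. -/
theorem stmt_18 (k : ℕ → ℕ)
    (hk : ∀ᶠ n : ℕ in atTop, 1 ≤ k n ∧ k n ≤ n - 1) :
    Tendsto (fun n : ℕ =>
        prob (fun ω : KOut n (k n) =>
          (∃ v : Vtx n, deg (kOutGraph n (k n) ω) v = k n) ∧
            ¬ IsLConnected (kOutGraph n (k n) ω) (k n + 1)))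
      atTop (nhds 1) := by
  have hρ : |exp (exp 1)⁻¹ / 2| < 1 := by
    rw [abs_of_pos (by positivity), div_lt_one two_pos]
    exact exp_inv_exp_one_lt_two
  have hlower : Tendsto (fun n : ℕ => 1 - ((n : ℝ) + 1) ^ 2 * (exp (exp 1)⁻¹ / 2) ^ n)
      atTop (nhds 1) := by
    simpa using (tendsto_add_one_sq_mul_pow hρ).const_sub 1
  refine tendsto_of_tendsto_of_tendsto_of_le_of_le' hlower tendsto_const_nhds ?_
    (Eventually.of_forall fun n => prob_le_one _)
  filter_upwards [hk] with n hkn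
  refine (one_sub_le_prob_exists_reciprocated (by omega)).trans (prob_mono ?_)
  rintro ω ⟨v, hv⟩
  have hdeg := (deg_kOutGraph_eq_iff_reciprocated ω v).2 hv
  have hconn := not_isLConnected_deg_add_one (kOutGraph n (k n) ω) v
  rw [hdeg] at hconn
  exact ⟨⟨v, hdeg⟩, hconn⟩

end
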